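/- If R is a non-negative complex symplectic transformation (symplectic and i(σ(conj(RX), RX) - σ(conj(X), X)) ≥ 0 for all X ∈ ℂ^{2n}) with R + I invertible, then for all X ∈ ℂ^{2n}, Re(iσ(conj(X), (R - I)(R + I)^{-1}X)) ≥ 0. -/

import Mathlib

/-!
Put `Y = (R + 1)⁻¹ X`, so that `X = RY + Y` and `(R - 1)(R + 1)⁻¹ X = RY - Y`. The form
`h(u, v) = iσ(conj u, v)` is Hermitian, hence
`h(RY + Y, RY - Y) = h(RY, RY) - h(Y, Y) + (conj w - w)` with `w = h(RY, Y)`. The last term is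
purely imaginary, so the real part is `h(RY, RY) - h(Y, Y)`, which is non-negative by assumption.
-/

open Matrix
open scoped ComplexOrder

/-- The standard symplectic matrix `[[0, Iₙ], [-Iₙ, 0]]`. -/
noncomputable def sympMat (n : ℕ) : Matrix (Fin n ⊕ Fin n) (Fin n ⊕ Fin n) ℂ :=
  Matrix.fromBlocks 0 1 (-1) 0

/-- The standard symplectic bilinear form `σ((x,ξ),(y,η)) = ⟨ξ,y⟩ - ⟨x,η⟩` on `ℂ^{2n}`. -/
noncomputable def sympForm (n : ℕ) (X Y : Fin n ⊕ Fin n → ℂ) : ℂ :=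
  (sympMat n *ᵥ X) ⬝ᵥ Y

section SymplecticForm

variable (n : ℕ)

lemma sympMat_transpose : (sympMat n)ᵀ = -sympMat n := by
  ext i j
  cases i <;> cases j <;> simp [sympMat, one_apply, eq_comm]

lemma sympMat_conjTranspose : (sympMat n)ᴴ = -sympMat n := by
  ext i j
  cases i <;> cases j <;> simp [sympMat, one_apply, eq_comm, apply_ite]

variable {n}

lemma sympForm_swap (u v : Fin n ⊕ Fin n → ℂ) : sympForm n v u = -sympForm n u v := by
  rw [sympForm, sympForm, dotProduct_comm, dotProduct_mulVec, ← mulVec_transpose,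
    sympMat_transpose, neg_mulVec, neg_dotProduct]

lemma star_sympForm (u v : Fin n ⊕ Fin n → ℂ) :
    star (sympForm n u v) = sympForm n (star u) (star v) := by
  rw [sympForm, sympForm, ← star_dotProduct_star, dotProduct_comm, star_mulVec,
    sympMat_conjTranspose, vecMul_neg, ← mulVec_transpose, sympMat_transpose, neg_mulVec,
    neg_neg]

lemma star_I_mul_sympForm_star (u v : Fin n ⊕ Fin n → ℂ) :
    star (Complex.I * sympForm n (star u) v) = Complex.I * sympForm n (star v) u := by
  rw [star_mul', star_sympForm, star_star, sympForm_swap, Complex.star_def, Complex.conj_I]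
  ring

lemma re_I_mul_sympForm_star_add_sub (a b : Fin n ⊕ Fin n → ℂ) :
    (Complex.I * sympForm n (star (a + b)) (a - b)).re =
      (Complex.I * (sympForm n (star a) a - sympForm n (star b) b)).re := by
  have hexpand : Complex.I * sympForm n (star (a + b)) (a - b) =
      Complex.I * (sympForm n (star a) a - sympForm n (star b) b) +
        (Complex.I * sympForm n (star b) a - Complex.I * sympForm n (star a) b) := by
    simp only [sympForm, star_add, mulVec_add, add_dotProduct, dotProduct_sub]
    ring
  have hcross :
      (Complex.I * sympForm n (star b) a - Complex.I * sympForm n (star a) b).re = 0 := by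
    rw [← star_I_mul_sympForm_star, Complex.sub_re, Complex.star_def, Complex.conj_re, sub_self]
  rw [hexpand, Complex.add_re, hcross, add_zero]

end SymplecticForm

theorem cayley_re_nonneg_general (n : ℕ)
    (R : Matrix (Fin n ⊕ Fin n) (Fin n ⊕ Fin n) ℂ)
    (hnonneg : ∀ X : Fin n ⊕ Fin n → ℂ,
      0 ≤ Complex.I * (sympForm n (star (R *ᵥ X)) (R *ᵥ X) - sympForm n (star X) X))
    (h : IsUnit (R + 1).det) :
    ∀ X : Fin n ⊕ Fin n → ℂ,
      0 ≤ (Complex.I * sympForm n (star X) (((R - 1) * (R + 1)⁻¹) *ᵥ X)).re := by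
  intro X
  set Y := (R + 1)⁻¹ *ᵥ X
  have hX : X = R *ᵥ Y + Y :=
    calc X = (R + 1) *ᵥ Y := by rw [mulVec_mulVec, mul_nonsing_inv _ h, one_mulVec]
      _ = R *ᵥ Y + Y := by rw [add_mulVec, one_mulVec]
  have hcayley : ((R - 1) * (R + 1)⁻¹) *ᵥ X = R *ᵥ Y - Y := by
    rw [← mulVec_mulVec, sub_mulVec, one_mulVec]
  rw [hcayley, hX, re_I_mul_sympForm_star_add_sub]
  exact (Complex.nonneg_iff.mp (hnonneg Y)).1

/-- If `R` is a non-negative complex symplectic transformation with `R + I` invertible, then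
for all `X ∈ ℂ^{2n}`, `Re(iσ(conj X, (R - I)(R + I)⁻¹ X)) ≥ 0`. -/
theorem cayley_re_nonneg (n : ℕ)
    (R : Matrix (Fin n ⊕ Fin n) (Fin n ⊕ Fin n) ℂ)
    (hsymp : ∀ X Y : Fin n ⊕ Fin n → ℂ, sympForm n (R *ᵥ X) (R *ᵥ Y) = sympForm n X Y)
    (hnonneg : ∀ X : Fin n ⊕ Fin n → ℂ,
      0 ≤ Complex.I * (sympForm n (star (R *ᵥ X)) (R *ᵥ X) - sympForm n (star X) X))
    (h : IsUnit (R + 1).det) :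
    ∀ X : Fin n ⊕ Fin n → ℂ,
      0 ≤ (Complex.I * sympForm n (star X) (((R - 1) * (R + 1)⁻¹) *ᵥ X)).re :=
  cayley_re_nonneg_general n R hnonneg h
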